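/- arXiv:1111.6059 — 4 statements merged into one kernel-verified Lean document; each statement's English description precedes it below -/
import Mathlib

section
/- Let x_1,...,x_N and y_1,...,y_N be complex numbers, with the x_i pairwise distinct, the y_j pairwise distinct, and x_i ≠ y_j for all i,j. Then the numbers a_k = (∏_{i=1}^N (x_k - y_i)) / (∏_{i≠k} (x_k - x_i)) satisfy ∑_{i=1}^N a_i/(y_j - x_i) = -1 for every j = 1,...,N. -/
/-!
Let `P = ∏ (X - xᵢ)` and `Q = ∏ (X - yᵢ)`. Both are monic of degree `N`, so `Q - P` has degree
`< N` and equals its Lagrange interpolant at the nodes `xᵢ`, where it takes the values `Q(xᵢ)`.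
Evaluating the barycentric form of that interpolant at a root `yⱼ` of `Q`, where `Q - P` takes
the value `-P(yⱼ)`, and dividing by `P(yⱼ) ≠ 0` gives the identity, since `aₖ = Q(xₖ) / P'(xₖ)`
is `Q(xₖ)` times the barycentric weight of the node `xₖ`.
-/

open Polynomial Finset

namespace Lagrange

variable {F ι : Type*} [Field F] [DecidableEq ι] {s : Finset ι} {v : ι → F} {x : F}

theorem eval_eq_eval_nodal_mul_sum_nodalWeight {f : F[X]} (hvs : Set.InjOn v s)
    (hf : f.degree < #s) (hx : ∀ i ∈ s, x ≠ v i) :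
    f.eval x = (nodal s v).eval x * ∑ i ∈ s, nodalWeight s v i * (x - v i)⁻¹ * f.eval (v i) := by
  conv_lhs => rw [eq_interpolate hvs hf]
  exact eval_interpolate_not_at_node _ hx

theorem sum_nodalWeight_mul_inv_sub_mul_eval_eq_neg_one {q : F[X]} (hvs : Set.InjOn v s)
    (hq : q.Monic) (hqs : q.degree = #s) (hqx : q.IsRoot x) (hx : ∀ i ∈ s, x ≠ v i) :
    ∑ i ∈ s, nodalWeight s v i * (x - v i)⁻¹ * q.eval (v i) = -1 := by
  have hdeg : (q - nodal s v).degree < #s := by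
    rw [← degree_nodal (v := v)]
    exact degree_sub_lt_right (by rw [hqs, degree_nodal]) nodal_ne_zero
      (by rw [hq.leadingCoeff, nodal_monic.leadingCoeff])
  have key := eval_eq_eval_nodal_mul_sum_nodalWeight hvs hdeg hx
  have hnodes : ∀ i ∈ s, (q - nodal s v).eval (v i) = q.eval (v i) := fun i hi => by
    rw [eval_sub, eval_nodal_at_node hi, sub_zero]
  rw [sum_congr rfl fun i hi => by rw [hnodes i hi], eval_sub, hqx.eq_zero, zero_sub] at key
  have hPx := eval_nodal_not_at_node hx
  exact mul_left_cancel₀ hPx (by rw [← key, mul_neg_one])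

end Lagrange

open Lagrange

theorem stmt_1_general (N : ℕ) (x y : Fin N → ℂ)
    (hx : Function.Injective x)
    (hxy : ∀ i j, x i ≠ y j)
    (a : Fin N → ℂ)
    (ha : ∀ k, a k = (∏ i, (x k - y i)) / (∏ i ∈ Finset.univ.erase k, (x k - x i))) :
    ∀ j, ∑ i, a i / (y j - x i) = -1 := by
  intro j
  have ha' : ∀ i, a i / (y j - x i)
      = nodalWeight univ x i * (y j - x i)⁻¹ * (nodal univ y).eval (x i) := fun i => by
    rw [ha, nodalWeight, prod_inv_distrib, eval_nodal]
    ring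
  rw [sum_congr rfl fun i _ => ha' i]
  exact sum_nodalWeight_mul_inv_sub_mul_eval_eq_neg_one hx.injOn nodal_monic
    degree_nodal (eval_nodal_at_node (mem_univ j))
    fun i _ => (hxy i j).symm

/-- Explicit solution of the Cauchy system with right-hand side `-1`. -/
theorem stmt_1 (N : ℕ) (x y : Fin N → ℂ)
    (hx : Function.Injective x) (hy : Function.Injective y)
    (hxy : ∀ i j, x i ≠ y j)
    (a : Fin N → ℂ)
    (ha : ∀ k, a k = (∏ i, (x k - y i)) / (∏ i ∈ Finset.univ.erase k, (x k - x i))) :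
    ∀ j, ∑ i, a i / (y j - x i) = -1 :=
  stmt_1_general N x y hx hxy a ha
end

section
/- Let x_1,...,x_N and y_1,...,y_N be complex numbers, with the x_i pairwise distinct, the y_j pairwise distinct, and x_i ≠ y_j for all i,j. Then the system ∑_{i=1}^N a_i/(y_j - x_i) = -1, j = 1,...,N, has a unique solution (a_1,...,a_N), given by a_k = (∏_{i=1}^N (x_k - y_i)) / (∏_{i≠k} (x_k - x_i)). -/
open Polynomial Finset

lemma aux_deg_lt (N : ℕ) (hN : 0 < N) (x : Fin N → ℂ) (c : Fin N → ℂ) :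
    (∑ k, C (c k) * ∏ m ∈ univ.erase k, (X - C (x m))).degree < (N : WithBot ℕ) := by
  apply lt_of_le_of_lt (degree_sum_le _ _)
  rw [Finset.sup_lt_iff (by exact_mod_cast WithBot.bot_lt_coe N)]
  intro k _
  calc (C (c k) * ∏ m ∈ univ.erase k, (X - C (x m))).degree
      ≤ (C (c k)).degree + (∏ m ∈ univ.erase k, (X - C (x m))).degree := degree_mul_le _ _
    _ ≤ 0 + (∏ m ∈ univ.erase k, (X - C (x m))).degree := by
        gcongr; exact degree_C_le
    _ = (∏ m ∈ univ.erase k, (X - C (x m))).degree := by rw [zero_add]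
    _ = ((N - 1 : ℕ) : WithBot ℕ) := by
        rw [degree_prod]
        simp [degree_X_sub_C, Finset.card_erase_of_mem]
    _ < (N : WithBot ℕ) := by exact_mod_cast Nat.sub_lt hN one_pos

/-- A function in the kernel of the Cauchy system is zero. -/
lemma aux_ker (N : ℕ) (x y : Fin N → ℂ)
    (hx : Function.Injective x) (hy : Function.Injective y)
    (hxy : ∀ i j, x i ≠ y j) (c : Fin N → ℂ)
    (h : ∀ j, ∑ i, c i / (y j - x i) = 0) : ∀ k, c k = 0 := by
  rcases Nat.eq_zero_or_pos N with hN | hN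
  · intro k; exact absurd k.2 (by omega)
  set Q : ℂ[X] := ∑ k, C (c k) * ∏ m ∈ univ.erase k, (X - C (x m)) with hQdef
  have hyx : ∀ j i, y j - x i ≠ 0 := fun j i => sub_ne_zero.mpr (fun e => hxy i j e.symm)
  have hQ : Q = 0 := by
    by_cases h0 : Q = 0
    · exact h0
    apply eq_zero_of_natDegree_lt_card_of_eval_eq_zero Q hy
    · intro j
      have hprod : (∏ m, (y j - x m)) ≠ 0 := prod_ne_zero_iff.mpr fun m _ => hyx j m
      have := h j
      have key : ∑ k, c k * ∏ m ∈ univ.erase k, (y j - x m) = 0 := by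
        have : ∑ k, c k / (y j - x k) * ∏ m, (y j - x m) = 0 := by
          rw [← Finset.sum_mul, h j, zero_mul]
        rw [← this]
        apply Finset.sum_congr rfl
        intro k _
        rw [← Finset.mul_prod_erase univ (fun m => y j - x m) (mem_univ k),
          div_mul_eq_mul_div, eq_div_iff (hyx j k)]
        ring
      simpa [hQdef, eval_finset_sum, eval_prod] using key
    · rw [← Nat.cast_lt (α := WithBot ℕ), ← degree_eq_natDegree h0]
      simpa [Fintype.card_fin] using aux_deg_lt N hN x c
  intro k
  have hD : (∏ m ∈ univ.erase k, (x k - x m)) ≠ 0 :=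
    prod_ne_zero_iff.mpr fun m hm => sub_ne_zero.mpr (fun e => (mem_erase.mp hm).1 ((hx e).symm))
  have := congrArg (fun p => Polynomial.eval (x k) p) hQ
  simp only [hQdef, eval_finset_sum, eval_mul, eval_C, eval_prod, eval_sub, eval_X, eval_zero] at this
  rw [Finset.sum_eq_single k] at this
  · exact (mul_eq_zero.mp this).resolve_right hD
  · intro b _ hbk
    exact mul_eq_zero_of_right _
      (Finset.prod_eq_zero (Finset.mem_erase.mpr ⟨Ne.symm hbk, mem_univ k⟩) (sub_self _))
  · simp

/-- The explicit formula satisfies the Cauchy system. -/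
lemma aux_sol (N : ℕ) (x y : Fin N → ℂ)
    (hx : Function.Injective x) (hy : Function.Injective y)
    (hxy : ∀ i j, x i ≠ y j)
    (b : Fin N → ℂ)
    (hb : ∀ k, b k = (∏ i, (x k - y i)) / (∏ i ∈ univ.erase k, (x k - x i))) :
    ∀ j, ∑ i, b i / (y j - x i) = -1 := by
  intro j
  have hN : 0 < N := j.pos
  have hyx : ∀ j i, y j - x i ≠ 0 := fun j i => sub_ne_zero.mpr (fun e => hxy i j e.symm)
  have hD : ∀ k, (∏ m ∈ univ.erase k, (x k - x m)) ≠ 0 := fun k =>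
    prod_ne_zero_iff.mpr fun m hm => sub_ne_zero.mpr (fun e => (mem_erase.mp hm).1 ((hx e).symm))
  set Q : ℂ[X] := (∏ i, (X - C (y i))) - (∏ i, (X - C (x i)))
      - ∑ k, C (b k) * ∏ m ∈ univ.erase k, (X - C (x m)) with hQdef
  have hQ : Q = 0 := by
    by_cases h0 : Q = 0
    · exact h0
    apply eq_zero_of_natDegree_lt_card_of_eval_eq_zero Q hx
    · intro k
      have hbk : b k * ∏ m ∈ univ.erase k, (x k - x m) = ∏ i, (x k - y i) := by
        rw [hb k, div_mul_cancel₀ _ (hD k)]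
      simp only [hQdef, eval_sub, eval_prod, eval_finset_sum, eval_mul, eval_C, eval_X]
      rw [Finset.sum_eq_single k]
      · have hx0 : ∏ i, (x k - x i) = 0 :=
          Finset.prod_eq_zero (Finset.mem_univ k) (sub_self _)
        rw [hx0, hbk]; ring
      · intro m _ hmk
        exact mul_eq_zero_of_right _
          (Finset.prod_eq_zero (Finset.mem_erase.mpr ⟨Ne.symm hmk, mem_univ k⟩) (sub_self _))
      · simp
    · rw [← Nat.cast_lt (α := WithBot ℕ), ← degree_eq_natDegree h0, Fintype.card_fin]
      have h1 : ((∏ i, (X - C (y i))) - (∏ i, (X - C (x i)))).degree < (N : WithBot ℕ) := by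
        have hmx : (∏ i, (X - C (x i)) : ℂ[X]).Monic := monic_prod_of_monic _ _ (fun i _ => monic_X_sub_C _)
        have hmy : (∏ i, (X - C (y i)) : ℂ[X]).Monic := monic_prod_of_monic _ _ (fun i _ => monic_X_sub_C _)
        have hdx : (∏ i, (X - C (x i)) : ℂ[X]).degree = (N : WithBot ℕ) := by
          rw [degree_prod]; simp [degree_X_sub_C]
        have hdy : (∏ i, (X - C (y i)) : ℂ[X]).degree = (N : WithBot ℕ) := by
          rw [degree_prod]; simp [degree_X_sub_C]
        have := degree_sub_lt (hdy.trans hdx.symm) hmy.ne_zero (by rw [hmx.leadingCoeff, hmy.leadingCoeff])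
        rwa [hdy] at this
      calc Q.degree ≤ max ((∏ i, (X - C (y i))) - (∏ i, (X - C (x i)))).degree
            (∑ k, C (b k) * ∏ m ∈ univ.erase k, (X - C (x m))).degree := degree_sub_le _ _
        _ < (N : WithBot ℕ) := max_lt h1 (aux_deg_lt N hN x b)
  have := congrArg (fun p => Polynomial.eval (y j) p) hQ
  simp only [hQdef, eval_sub, eval_prod, eval_finset_sum, eval_mul, eval_C, eval_X, eval_zero] at this
  have hy0 : (∏ i, (y j - y i)) = 0 := Finset.prod_eq_zero (mem_univ j) (by simp)
  rw [hy0] at this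
  have key : ∑ k, b k * ∏ m ∈ univ.erase k, (y j - x m) = -∏ i, (y j - x i) := by
    linear_combination -this
  have hprod : (∏ m, (y j - x m)) ≠ 0 := prod_ne_zero_iff.mpr fun m _ => hyx j m
  have expand : ∀ k, b k / (y j - x k) = b k * (∏ m ∈ univ.erase k, (y j - x m)) / ∏ m, (y j - x m) := by
    intro k
    have hP : (∏ m ∈ univ.erase k, (y j - x m)) ≠ 0 :=
      prod_ne_zero_iff.mpr fun m _ => hyx j m
    rw [← Finset.mul_prod_erase univ (fun m => y j - x m) (mem_univ k),
      div_eq_div_iff (hyx j k) (mul_ne_zero (hyx j k) hP)]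
    ring
  calc ∑ i, b i / (y j - x i)
      = (∑ k, b k * ∏ m ∈ univ.erase k, (y j - x m)) / ∏ m, (y j - x m) := by
        rw [Finset.sum_div]; exact Finset.sum_congr rfl fun k _ => expand k
    _ = -1 := by rw [key]; field_simp

/-- The Cauchy system with constant right-hand side `-1` has the unique solution
given by the explicit product formula. -/
theorem stmt_2 (N : ℕ) (x y : Fin N → ℂ)
    (hx : Function.Injective x) (hy : Function.Injective y)
    (hxy : ∀ i j, x i ≠ y j) (a : Fin N → ℂ) :
    (∀ j, ∑ i, a i / (y j - x i) = -1) ↔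
      (∀ k, a k = (∏ i, (x k - y i)) / (∏ i ∈ Finset.univ.erase k, (x k - x i))) := by
  constructor
  · intro h
    set b : Fin N → ℂ := fun k => (∏ i, (x k - y i)) / (∏ i ∈ univ.erase k, (x k - x i)) with hbdef
    have hbsys := aux_sol N x y hx hy hxy b (fun k => rfl)
    have hker : ∀ j, ∑ i, (a i - b i) / (y j - x i) = 0 := by
      intro j
      simp only [sub_div, Finset.sum_sub_distrib, h j, hbsys j, sub_self]
    have := aux_ker N x y hx hy hxy (fun i => a i - b i) hker
    intro k
    simpa using sub_eq_zero.mp (this k)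
  · intro h
    exact aux_sol N x y hx hy hxy a h
end

section
/- Let S be a finite set of distinct even nonnegative integers and T a finite set of complex numbers with |T| = |S|, such that the L(L+1), L ∈ T, are pairwise distinct and differ from all l(l+1), l ∈ S, and cos(Lπ/2) ≠ 0 for all L ∈ T. Then the unique solution (a_L)_{L∈T} of the system ∑_{L∈T} a_L · cos(Lπ/2)/(L(L+1) − l(l+1)) = 1 for all l ∈ S is given by a_L = [∏_{l∈S} (L(L+1) − l(l+1)) / ∏_{L'∈T, L'≠L} (L(L+1) − L'(L'+1))] · 1/cos(Lπ/2). -/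
/-!
With `b_L = a_L cos(Lπ/2)`, `v_L = L(L+1)` and `w_l = l(l+1)` the system is the Cauchy system
`∑_L b_L / (v_L - w_l) = 1`. Writing `P = ∏_L (X - v_L)`, `Q = ∏_l (X - w_l)` and `I` for the
Lagrange interpolant of `b_L / nodalWeight_L` at the `v_L`, the barycentric formula gives
`P(x) ∑_L b_L / (v_L - x) = -I(x)`, so the system says that the monic polynomial `I + P`, of degree
`|T| = |S|`, vanishes at every `w_l`, i.e. `I + P = Q`. Evaluating at the nodes `v_L` gives
`b_L / nodalWeight_L = Q(v_L)`, which is the claimed formula.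
-/

open Polynomial Lagrange Finset

namespace Lagrange

variable {F : Type*} [Field F] {ι κ : Type*} [DecidableEq ι]

theorem eq_nodal_of_monic_of_eval_eq_zero {t : Finset κ} {w : κ → F} (hw : Set.InjOn w t)
    {f : F[X]} (hf : f.Monic) (hdeg : f.degree = #t) (hroots : ∀ j ∈ t, f.eval (w j) = 0) :
    f = nodal t w := by
  have hlt : (f - nodal t w).degree < #t := by
    rw [← hdeg]
    exact degree_sub_lt_left (by rw [hdeg, degree_nodal]) hf.ne_zero
      (by rw [hf.leadingCoeff, nodal_monic.leadingCoeff])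
  refine sub_eq_zero.mp (eq_zero_of_degree_lt_of_eval_index_eq_zero t hw hlt fun j hj => ?_)
  rw [eval_sub, hroots j hj, eval_nodal_at_node hj, sub_zero]

variable {s : Finset ι} {v : ι → F}

theorem eval_nodal_mul_sum_div_sub (hv : Set.InjOn v s) {x : F} (hx : ∀ i ∈ s, x ≠ v i)
    (c : ι → F) :
    eval x (nodal s v) * ∑ i ∈ s, c i / (v i - x) =
      -eval x (interpolate s v fun i => c i / nodalWeight s v i) := by
  rw [eval_interpolate_not_at_node _ hx, ← mul_neg, ← sum_neg_distrib]
  congr 1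
  refine sum_congr rfl fun i hi => ?_
  have hxi : x - v i ≠ 0 := sub_ne_zero.mpr (hx i hi)
  have hix : v i - x ≠ 0 := sub_ne_zero.mpr (hx i hi).symm
  field_simp [nodalWeight_ne_zero hv hi]
  ring

theorem sum_div_sub_eq_one_iff (hv : Set.InjOn v s) {x : F} (hx : ∀ i ∈ s, x ≠ v i)
    (c : ι → F) :
    ∑ i ∈ s, c i / (v i - x) = 1 ↔
      eval x (interpolate s v (fun i => c i / nodalWeight s v i) + nodal s v) = 0 := by
  rw [eval_add, ← neg_neg (eval x (interpolate _ _ _)), ← eval_nodal_mul_sum_div_sub hv hx,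
    neg_add_eq_zero, eq_comm, mul_eq_left₀ (eval_nodal_not_at_node hx), eq_comm]

theorem cauchy_system_iff {t : Finset κ} {w : κ → F} (hcard : #s = #t) (hv : Set.InjOn v s)
    (hw : Set.InjOn w t) (hvw : ∀ i ∈ s, ∀ j ∈ t, v i ≠ w j) (b : ι → F) :
    (∀ j ∈ t, ∑ i ∈ s, b i / (v i - w j) = 1) ↔
      ∀ i ∈ s, b i = (∏ j ∈ t, (v i - w j)) / ∏ k ∈ s.erase i, (v i - v k) := by
  set I := interpolate s v fun i => b i / nodalWeight s v i
  have hdegI : I.degree < (nodal s v).degree := by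
    rw [degree_nodal]; exact degree_interpolate_lt _ hv
  have hdegQP : (nodal t w - nodal s v).degree < #s := by
    have hdegQ : (nodal t w).degree = #s := by rw [degree_nodal, hcard]
    calc _ < (nodal t w).degree := degree_sub_lt_left (by rw [hdegQ, degree_nodal]) nodal_ne_zero
          (by rw [nodal_monic.leadingCoeff, nodal_monic.leadingCoeff])
      _ = #s := hdegQ
  calc (∀ j ∈ t, ∑ i ∈ s, b i / (v i - w j) = 1)
      ↔ ∀ j ∈ t, eval (w j) (I + nodal s v) = 0 := forall₂_congr fun j hj =>
        sum_div_sub_eq_one_iff hv (fun i hi => (hvw i hi j hj).symm) b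
    _ ↔ I + nodal s v = nodal t w := by
        refine ⟨eq_nodal_of_monic_of_eval_eq_zero hw (nodal_monic.add_of_right hdegI) ?_, ?_⟩
        · rw [degree_add_eq_right_of_degree_lt hdegI, degree_nodal, hcard]
        · rintro h j hj; rw [h, eval_nodal_at_node hj]
    _ ↔ I = interpolate s v fun i => eval (v i) (nodal t w - nodal s v) := by
        rw [← eq_interpolate hv hdegQP, eq_sub_iff_add_eq]
    _ ↔ ∀ i ∈ s, b i / nodalWeight s v i = ∏ j ∈ t, (v i - w j) := by
        rw [interpolate_eq_iff_values_eq_on _ _ hv]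
        refine forall₂_congr fun i hi => ?_
        rw [eval_sub, eval_nodal_at_node hi, sub_zero, eval_nodal]
    _ ↔ _ := forall₂_congr fun i hi => by
        rw [div_eq_iff (nodalWeight_ne_zero hv hi), nodalWeight, prod_inv_distrib, div_eq_mul_inv]

end Lagrange

theorem injective_natCast_mul_succ {R : Type*} [CommSemiring R] [CharZero R] :
    Function.Injective fun l : ℕ => (l : R) * (l + 1) := by
  have hmono : StrictMono fun l : ℕ => l * (l + 1) :=
    strictMono_nat_of_lt_succ fun l => by nlinarith
  intro l l' h
  exact hmono.injective (Nat.cast_injective (R := R) (by push_cast; exact h))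

theorem stmt_6_general (S : Finset ℕ) (T : Finset ℂ)
    (hcard : T.card = S.card)
    (hT : ∀ L ∈ T, ∀ L' ∈ T, L * (L + 1) = L' * (L' + 1) → L = L')
    (hTS : ∀ L ∈ T, ∀ l ∈ S, L * (L + 1) ≠ (l : ℂ) * ((l : ℂ) + 1))
    (hcos : ∀ L ∈ T, Complex.cos (L * (Real.pi : ℂ) / 2) ≠ 0)
    (a : ℂ → ℂ) :
    (∀ l ∈ S, ∑ L ∈ T,
        a L * Complex.cos (L * (Real.pi : ℂ) / 2) / (L * (L + 1) - (l : ℂ) * ((l : ℂ) + 1)) = 1) ↔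
    (∀ L ∈ T, a L =
        ((∏ l ∈ S, (L * (L + 1) - (l : ℂ) * ((l : ℂ) + 1))) /
          (∏ L' ∈ T.erase L, (L * (L + 1) - L' * (L' + 1)))) *
          (Complex.cos (L * (Real.pi : ℂ) / 2))⁻¹) := by
  rw [cauchy_system_iff hcard hT injective_natCast_mul_succ.injOn hTS]
  exact forall₂_congr fun L hL => (eq_mul_inv_iff_mul_eq₀ (hcos L hL)).symm

/-- Semi-analytic solution of the even-parity Cox–Thompson asymptotic system. -/
theorem stmt_6 (S : Finset ℕ) (T : Finset ℂ)
    (hcard : T.card = S.card)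
    (hSeven : ∀ l ∈ S, Even l)
    (hT : ∀ L ∈ T, ∀ L' ∈ T, L * (L + 1) = L' * (L' + 1) → L = L')
    (hTS : ∀ L ∈ T, ∀ l ∈ S, L * (L + 1) ≠ (l : ℂ) * ((l : ℂ) + 1))
    (hcos : ∀ L ∈ T, Complex.cos (L * (Real.pi : ℂ) / 2) ≠ 0)
    (a : ℂ → ℂ) :
    (∀ l ∈ S, ∑ L ∈ T,
        a L * Complex.cos (L * (Real.pi : ℂ) / 2) / (L * (L + 1) - (l : ℂ) * ((l : ℂ) + 1)) = 1) ↔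
    (∀ L ∈ T, a L =
        ((∏ l ∈ S, (L * (L + 1) - (l : ℂ) * ((l : ℂ) + 1))) /
          (∏ L' ∈ T.erase L, (L * (L + 1) - L' * (L' + 1)))) *
          (Complex.cos (L * (Real.pi : ℂ) / 2))⁻¹) :=
  stmt_6_general S T hcard hT hTS hcos a
end

section
/- Let S be a finite set of distinct odd positive integers and T a finite set of complex numbers with |T| = |S|, such that the L(L+1), L ∈ T, are pairwise distinct and differ from all l(l+1), l ∈ S, and sin(Lπ/2) ≠ 0 for all L ∈ T. Then the unique solution (b_L)_{L∈T} of the system ∑_{L∈T} b_L · sin(Lπ/2)/(L(L+1) − l(l+1)) = 1 for all l ∈ S is given by b_L = [∏_{l∈S} (L(L+1) − l(l+1)) / ∏_{L'∈T, L'≠L} (L(L+1) − L'(L'+1))] · 1/sin(Lπ/2). -/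
/-!
With `x L = L (L + 1)`, `y l = l (l + 1)` and `c L = b L * sin (L π / 2)` the equations form the
Cauchy system `∑ i, c i / (x i - y j) = 1` with `n` unknowns and `n` equations.
Write `w i` for the barycentric weights of the nodes `x i` and let `P` be the polynomial of degree
`< n` interpolating `c i / w i` at the nodes `x i`. By the first barycentric formula, the equation
of the Cauchy system at `y j` says `P (y j) = -∏ i, (y j - x i)`. Since both nodal polynomials are
monic of degree `n`, `D = ∏ j, (X - y j) - ∏ i, (X - x i)` has degree `< n`, so the whole system
says `P = D`, i.e. `P (x i) = D (x i) = ∏ j, (x i - y j)` for all `i`, which is the claimed formula.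
-/

open Polynomial Finset Lagrange

section CauchySystem

variable {F ι κ : Type*} [Field F] {s : Finset ι} {t : Finset κ} {x : ι → F} {y : κ → F}

theorem Polynomial.eq_iff_forall_eval_index_eq {f g : F[X]} (hx : Set.InjOn x s)
    (hf : f.degree < #s) (hg : g.degree < #s) :
    f = g ↔ ∀ i ∈ s, f.eval (x i) = g.eval (x i) :=
  ⟨fun h _ _ => h ▸ rfl, eq_of_degrees_lt_of_eval_index_eq s hx hf hg⟩

theorem Lagrange.degree_nodal_sub_nodal_lt (hst : #s = #t) :
    (nodal t y - nodal s x).degree < #s := by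
  have hdeg : (nodal t y).degree = (nodal s x).degree := by rw [degree_nodal, degree_nodal, hst]
  calc (nodal t y - nodal s x).degree
      < (nodal t y).degree :=
        degree_sub_lt_left hdeg nodal_ne_zero
          (by rw [nodal_monic.leadingCoeff, nodal_monic.leadingCoeff])
    _ = #s := by rw [hdeg, degree_nodal]

variable [DecidableEq ι]

theorem Lagrange.sum_div_sub_eq_one_iff_s7 (hx : Set.InjOn x s) (c : ι → F) {z : F}
    (hz : ∀ i ∈ s, z ≠ x i) :
    ∑ i ∈ s, c i / (x i - z) = 1 ↔
      (interpolate s x fun i => c i / nodalWeight s x i).eval z = -(nodal s x).eval z := by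
  have hsum : ∑ i ∈ s, nodalWeight s x i * (z - x i)⁻¹ * (c i / nodalWeight s x i) =
      -∑ i ∈ s, c i / (x i - z) := by
    rw [← sum_neg_distrib]
    refine sum_congr rfl fun i hi => ?_
    have := nodalWeight_ne_zero hx hi
    rw [← neg_sub z, div_neg, neg_neg]
    field_simp
  rw [eval_interpolate_not_at_node _ hz, hsum, mul_neg, neg_inj,
    mul_eq_left₀ (eval_nodal_not_at_node hz)]

theorem Lagrange.cauchy_system_iff_s7 (hx : Set.InjOn x s) (hy : Set.InjOn y t) (hst : #s = #t)
    (hxy : ∀ i ∈ s, ∀ j ∈ t, x i ≠ y j) (c : ι → F) :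
    (∀ j ∈ t, ∑ i ∈ s, c i / (x i - y j) = 1) ↔
      ∀ i ∈ s, c i = (∏ j ∈ t, (x i - y j)) * nodalWeight s x i := by
  set P := interpolate s x fun i => c i / nodalWeight s x i
  have hP : P.degree < #s := degree_interpolate_lt _ hx
  have hD := degree_nodal_sub_nodal_lt (x := x) (y := y) hst
  calc (∀ j ∈ t, ∑ i ∈ s, c i / (x i - y j) = 1)
      ↔ ∀ j ∈ t, P.eval (y j) = (nodal t y - nodal s x).eval (y j) := by
        refine forall₂_congr fun j hj => ?_
        rw [sum_div_sub_eq_one_iff_s7 hx c fun i hi => (hxy i hi j hj).symm, eval_sub,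
          eval_nodal_at_node hj, zero_sub]
    _ ↔ P = nodal t y - nodal s x :=
        (eq_iff_forall_eval_index_eq hy (hst ▸ hP) (hst ▸ hD)).symm
    _ ↔ ∀ i ∈ s, P.eval (x i) = (nodal t y - nodal s x).eval (x i) :=
        eq_iff_forall_eval_index_eq hx hP hD
    _ ↔ ∀ i ∈ s, c i = (∏ j ∈ t, (x i - y j)) * nodalWeight s x i := by
        refine forall₂_congr fun i hi => ?_
        rw [eval_interpolate_at_node _ hx hi, eval_sub, eval_nodal_at_node hi, sub_zero,
          eval_nodal, div_eq_iff (nodalWeight_ne_zero hx hi)]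

end CauchySystem

theorem Nat.injective_cast_mul_add_one {R : Type*} [Semiring R] [CharZero R] :
    Function.Injective fun n : ℕ => (n : R) * (n + 1) := by
  intro a b h
  have hmono : StrictMono fun n : ℕ => n * (n + 1) :=
    strictMono_nat_of_lt_succ fun n => by nlinarith
  exact hmono.injective (Nat.cast_injective (R := R) (by push_cast; exact h))

theorem stmt_7_general (S : Finset ℕ) (T : Finset ℂ)
    (hcard : T.card = S.card)
    (hT : ∀ L ∈ T, ∀ L' ∈ T, L * (L + 1) = L' * (L' + 1) → L = L')
    (hTS : ∀ L ∈ T, ∀ l ∈ S, L * (L + 1) ≠ (l : ℂ) * ((l : ℂ) + 1))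
    (hsin : ∀ L ∈ T, Complex.sin (L * (Real.pi : ℂ) / 2) ≠ 0)
    (b : ℂ → ℂ) :
    (∀ l ∈ S, ∑ L ∈ T,
        b L * Complex.sin (L * (Real.pi : ℂ) / 2) / (L * (L + 1) - (l : ℂ) * ((l : ℂ) + 1)) = 1) ↔
    (∀ L ∈ T, b L =
        ((∏ l ∈ S, (L * (L + 1) - (l : ℂ) * ((l : ℂ) + 1))) /
          (∏ L' ∈ T.erase L, (L * (L + 1) - L' * (L' + 1)))) *
          (Complex.sin (L * (Real.pi : ℂ) / 2))⁻¹) := by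
  classical
  rw [cauchy_system_iff_s7 (x := fun L : ℂ => L * (L + 1)) hT
    (Nat.injective_cast_mul_add_one.injOn) hcard hTS]
  refine forall₂_congr fun L hL => ?_
  rw [eq_mul_inv_iff_mul_eq₀ (hsin L hL), nodalWeight, prod_inv_distrib, ← div_eq_mul_inv]

/-- Semi-analytic solution of the odd-parity Cox–Thompson asymptotic system. -/
theorem stmt_7 (S : Finset ℕ) (T : Finset ℂ)
    (hcard : T.card = S.card)
    (hSodd : ∀ l ∈ S, Odd l ∧ 0 < l)
    (hT : ∀ L ∈ T, ∀ L' ∈ T, L * (L + 1) = L' * (L' + 1) → L = L')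
    (hTS : ∀ L ∈ T, ∀ l ∈ S, L * (L + 1) ≠ (l : ℂ) * ((l : ℂ) + 1))
    (hsin : ∀ L ∈ T, Complex.sin (L * (Real.pi : ℂ) / 2) ≠ 0)
    (b : ℂ → ℂ) :
    (∀ l ∈ S, ∑ L ∈ T,
        b L * Complex.sin (L * (Real.pi : ℂ) / 2) / (L * (L + 1) - (l : ℂ) * ((l : ℂ) + 1)) = 1) ↔
    (∀ L ∈ T, b L =
        ((∏ l ∈ S, (L * (L + 1) - (l : ℂ) * ((l : ℂ) + 1))) /
          (∏ L' ∈ T.erase L, (L * (L + 1) - L' * (L' + 1)))) *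
          (Complex.sin (L * (Real.pi : ℂ) / 2))⁻¹) :=
  stmt_7_general S T hcard hT hTS hsin b
end
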